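/- arXiv:1801.06199 — 4 statements merged into one kernel-verified Lean document; each statement's English description precedes it below -/
import Mathlib

section
/- Let H be a real Hilbert space and A : H → H a continuously invertible bounded linear operator. Then for any vectors e₁, …, eₙ ∈ H, the Gram determinant satisfies G(Ae₁, …, Aeₙ) ≥ ‖A⁻¹‖^(−2n) · G(e₁, …, eₙ). -/
/-!
Since `‖e‖ = ‖A⁻¹ (A e)‖ ≤ ‖A⁻¹‖ ‖A e‖`, the Gram matrices satisfy
`G(e) ≤ ‖A⁻¹‖² G(Ae)` in the Loewner order, and the determinant is monotone on positive
semidefinite matrices: for `0 ≤ P ≤ Q` with `P` invertible, conjugating by `P^{-1/2}` gives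
`1 ≤ P^{-1/2} Q P^{-1/2}`, whose eigenvalues are all at least `1`.
-/

open scoped MatrixOrder RealInnerProductSpace

namespace Matrix

variable {n : Type*} [Fintype n] [DecidableEq n]

theorem one_le_det_of_one_le {M : Matrix n n ℝ} (h : 1 ≤ M) : 1 ≤ M.det := by
  have hM : M.IsHermitian := by
    simpa using (le_iff.mp h).isHermitian.add isHermitian_one
  have hspec := (CFC.one_le_iff (R := ℝ) M hM.isSelfAdjoint).mp h
  rw [hM.det_eq_prod_eigenvalues]
  refine Finset.one_le_prod fun i _ => hspec _ ?_
  rw [hM.spectrum_real_eq_range_eigenvalues]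
  exact ⟨i, rfl⟩

theorem det_le_det_of_le {A B : Matrix n n ℝ} (hA : 0 ≤ A) (hAB : A ≤ B) : A.det ≤ B.det := by
  obtain hdet | hdet := eq_or_ne A.det 0
  · rw [hdet]
    exact (nonneg_iff_posSemidef.mp (hA.trans hAB)).det_nonneg
  set S := CFC.sqrt A
  have hSS : S * S = A := CFC.sqrt_mul_sqrt_self A hA
  have hS : IsUnit S.det := by
    rw [isUnit_iff_ne_zero]
    exact fun h => hdet (by rw [← hSS, det_mul, h, zero_mul])
  have hSinv : IsSelfAdjoint S⁻¹ := IsHermitian.inv (CFC.sqrt_nonneg A).isSelfAdjoint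
  have hM : 1 ≤ S⁻¹ * B * S⁻¹ := calc
    1 = S⁻¹ * A * S⁻¹ := by
      rw [← hSS, mul_assoc, mul_assoc, mul_nonsing_inv _ hS, mul_one, nonsing_inv_mul _ hS]
    _ ≤ S⁻¹ * B * S⁻¹ := hSinv.conjugate_le_conjugate hAB
  have hB : B = S * (S⁻¹ * B * S⁻¹) * S := by
    rw [mul_assoc, mul_assoc, nonsing_inv_mul _ hS, mul_one, mul_nonsing_inv_cancel_left _ _ hS]
  rw [hB, det_mul, det_mul, mul_right_comm, ← det_mul, hSS]
  exact le_mul_of_one_le_right (nonneg_iff_posSemidef.mp hA).det_nonneg (one_le_det_of_one_le hM)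

theorem det_gram_comp_le {E F : Type*} [NormedAddCommGroup E] [InnerProductSpace ℝ E]
    [NormedAddCommGroup F] [InnerProductSpace ℝ F] (f : E →L[ℝ] F) (v : n → E) :
    (gram ℝ (f ∘ v)).det ≤ ‖f‖ ^ (2 * Fintype.card n) * (gram ℝ v).det := by
  rw [pow_mul, ← det_smul]
  exact det_le_det_of_le (posSemidef_gram ℝ (f ∘ v)).nonneg
    (posSemidef_opNorm_smul_gram_sub_gram v f)

end Matrix

/-- Gram determinant inequality for a continuously invertible bounded operator:
`G(Ae₁,…,Aeₙ) ≥ ‖A⁻¹‖^(−2n) · G(e₁,…,eₙ)`. -/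
theorem gram_det_ge_of_invertible {H : Type*} [NormedAddCommGroup H]
    [InnerProductSpace ℝ H] (A : H ≃L[ℝ] H) {n : ℕ} (e : Fin n → H) :
    Matrix.det (Matrix.of fun i j => ⟪A (e i), A (e j)⟫) ≥
      (‖(A.symm : H →L[ℝ] H)‖ ^ (2 * n))⁻¹ *
        Matrix.det (Matrix.of fun i j => ⟪e i, e j⟫) := by
  have h := Matrix.det_gram_comp_le (A.symm : H →L[ℝ] H) (A ∘ e)
  have hcomp : (A.symm : H →L[ℝ] H) ∘ A ∘ e = e := funext fun i => A.symm_apply_apply (e i)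
  rw [hcomp, Fintype.card_fin] at h
  -- `‖A⁻¹‖ = 0` happens only for trivial `H`, where the left factor is the junk value `0⁻¹ = 0`.
  obtain hC | hC := (pow_nonneg (norm_nonneg (A.symm : H →L[ℝ] H)) (2 * n)).eq_or_lt
  · rw [← hC, inv_zero, zero_mul]
    exact (Matrix.posSemidef_gram ℝ (A ∘ e)).det_nonneg
  · rw [ge_iff_le, inv_mul_le_iff₀ hC]
    exact h
end

section
/- Let Δ₁, …, Δₙ be measurable subsets of [0,1] and set Δ₀ = ∅. Then the Gram determinant of the indicator functions in L²([0,1]) satisfies G(𝟙_{Δ₁}, …, 𝟙_{Δₙ}) ≥ ∏_{k=1}^{n} λ(Δ_k \ ⋃_{j=1}^{k−1} Δ_j), where λ is Lebesgue measure. -/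
/-!
The Gram determinant of `v₀, …, vₙ` is `∏ₖ dist(vₖ, span{vⱼ : j < k})²`; we only need the
inequality `≥ ∏ₖ mₖ` for lower bounds `mₖ` of these squared distances. Inductively: if
`‖vₙ - w‖² ≥ q` for all `w` in the span of the earlier vectors, then `G - q • Eₙₙ` is still
positive semidefinite, and its determinant is `det G - q • det G'`, with `G'` the Gram matrix of
the earlier vectors.

For `vₖ = 𝟙_{Δₖ}` in `L²`, every `w` in the span of the earlier indicators vanishes on
`Eₖ = Δₖ \ ⋃_{j<k} Δⱼ`, i.e. `𝟙_{Eₖ} ⊥ w`, so Cauchy–Schwarz against `𝟙_{Eₖ}` gives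
`λ(Eₖ)² = ⟪𝟙_{Eₖ}, vₖ - w⟫² ≤ λ(Eₖ) ‖vₖ - w‖²`.
-/

open MeasureTheory Matrix Submodule
open scoped InnerProductSpace ENNReal

theorem Matrix.det_sub_single_last {R : Type*} [CommRing R] {n : ℕ}
    (M : Matrix (Fin (n + 1)) (Fin (n + 1)) R) (q : R) :
    (M - single (Fin.last n) (Fin.last n) q).det
      = M.det - q * (M.submatrix Fin.castSucc Fin.castSucc).det := by
  have hrow : M - single (Fin.last n) (Fin.last n) q
      = M.updateRow (Fin.last n) (M (Fin.last n) + (-q) • Pi.single (Fin.last n) 1) := by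
    ext i j
    by_cases hi : i = Fin.last n <;> by_cases hj : j = Fin.last n <;>
      simp [hi, hj, eq_comm, sub_eq_add_neg]
  have hminor := adjugate_fin_succ_eq_det_submatrix M (Fin.last n) (Fin.last n)
  rw [adjugate_apply] at hminor
  rw [hrow, det_updateRow_add, updateRow_eq_self, det_updateRow_smul, hminor]
  simp [Fin.succAbove_last, sub_eq_add_neg]

section Gram

variable {E : Type*} [SeminormedAddCommGroup E] [InnerProductSpace ℝ E]

theorem posSemidef_gram_sub_single_last {n : ℕ} (v : Fin (n + 1) → E) {q : ℝ}
    (hq : ∀ w ∈ span ℝ (v '' Set.Iio (Fin.last n)), q ≤ ‖v (Fin.last n) - w‖ ^ 2) :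
    (gram ℝ v - single (Fin.last n) (Fin.last n) q).PosSemidef := by
  have hsingle : (single (Fin.last n) (Fin.last n) q).IsHermitian := by
    rw [← diagonal_single]; exact isHermitian_diagonal _
  refine .of_dotProduct_mulVec_nonneg ((isHermitian_gram ℝ v).sub hsingle) fun x => ?_
  have hquad : star x ⬝ᵥ single (Fin.last n) (Fin.last n) q *ᵥ x = q * x (Fin.last n) ^ 2 := by
    rw [single_mulVec, star_trivial]
    exact (dotProduct_single _ _ _).trans (by ring)
  rw [sub_mulVec, dotProduct_sub, star_dotProduct_gram_mulVec, real_inner_self_eq_norm_sq, hquad,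
    sub_nonneg]
  rcases eq_or_ne (x (Fin.last n)) 0 with hx | hx
  · rw [hx]; simp
  set w := -(x (Fin.last n))⁻¹ • ∑ j : Fin n, x j.castSucc • v j.castSucc
  have hw : w ∈ span ℝ (v '' Set.Iio (Fin.last n)) :=
    smul_mem _ _ <| sum_mem fun j _ => smul_mem _ _ <|
      subset_span ⟨j.castSucc, Fin.castSucc_lt_last j, rfl⟩
  have hsum : ∑ i, x i • v i = x (Fin.last n) • (v (Fin.last n) - w) := by
    rw [Fin.sum_univ_castSucc, smul_sub, smul_smul]
    simp [hx, add_comm]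
  rw [hsum, norm_smul, mul_pow, Real.norm_eq_abs, sq_abs, mul_comm q]
  exact mul_le_mul_of_nonneg_left (hq w hw) (sq_nonneg _)

theorem prod_le_det_gram {n : ℕ} (v : Fin n → E) (m : Fin n → ℝ) (hm₀ : ∀ k, 0 ≤ m k)
    (hm : ∀ k, ∀ w ∈ span ℝ (v '' Set.Iio k), m k ≤ ‖v k - w‖ ^ 2) :
    ∏ k, m k ≤ (gram ℝ v).det := by
  induction n with
  | zero => simp
  | succ n ih =>
    have hinit : ∏ k : Fin n, m k.castSucc ≤ (gram ℝ (v ∘ Fin.castSucc)).det :=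
      ih _ _ (fun k => hm₀ _) fun k w hw =>
        hm k.castSucc w (by rwa [Set.image_comp, Fin.image_castSucc_Iio] at hw)
    have hlast := (posSemidef_gram_sub_single_last v (hm (Fin.last n))).det_nonneg
    rw [det_sub_single_last, sub_nonneg] at hlast
    calc ∏ k, m k = (∏ k : Fin n, m k.castSucc) * m (Fin.last n) := Fin.prod_univ_castSucc m
      _ ≤ (gram ℝ (v ∘ Fin.castSucc)).det * m (Fin.last n) :=
        mul_le_mul_of_nonneg_right hinit (hm₀ _)
      _ ≤ (gram ℝ v).det := by rw [mul_comm]; exact hlast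

theorem inner_sq_le_norm_sq_mul_norm_sub_sq {u x w : E} {S : Set E}
    (hS : ∀ y ∈ S, ⟪u, y⟫_ℝ = 0) (hw : w ∈ span ℝ S) :
    ⟪u, x⟫_ℝ ^ 2 ≤ ‖u‖ ^ 2 * ‖x - w‖ ^ 2 := by
  have huw : ⟪u, w⟫_ℝ = 0 := (span_le (p := LinearMap.ker (innerₛₗ ℝ u))).mpr hS hw
  calc ⟪u, x⟫_ℝ ^ 2 = ⟪u, x - w⟫_ℝ ^ 2 := by rw [inner_sub_right, huw, sub_zero]
    _ ≤ (‖u‖ * ‖x - w‖) ^ 2 := by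
      rw [← sq_abs]; exact pow_le_pow_left₀ (abs_nonneg _) (abs_real_inner_le_norm _ _) 2
    _ = ‖u‖ ^ 2 * ‖x - w‖ ^ 2 := mul_pow _ _ _

end Gram

theorem measureReal_le_norm_indicatorConstLp_sub_sq {α : Type*} [MeasurableSpace α]
    {μ : Measure α} {s t : Set α} (hs : MeasurableSet s) (ht : MeasurableSet t) (hμt : μ t ≠ ∞)
    (hst : s ⊆ t) {S : Set (Lp ℝ 2 μ)}
    (hS : ∀ y ∈ S, ⟪indicatorConstLp 2 hs (measure_ne_top_of_subset hst hμt) (1 : ℝ), y⟫_ℝ = 0)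
    {w : Lp ℝ 2 μ} (hw : w ∈ span ℝ S) :
    μ.real s ≤ ‖indicatorConstLp 2 ht hμt (1 : ℝ) - w‖ ^ 2 := by
  have hμs := measure_ne_top_of_subset hst hμt
  have h := inner_sq_le_norm_sq_mul_norm_sub_sq (x := indicatorConstLp 2 ht hμt (1 : ℝ)) hS hw
  rw [← real_inner_self_eq_norm_sq,
    L2.real_inner_indicatorConstLp_one_indicatorConstLp_one hs ht hμs hμt,
    L2.real_inner_indicatorConstLp_one_indicatorConstLp_one hs hs hμs hμs, Set.inter_self,
    Set.inter_eq_left.mpr hst, sq] at h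
  rcases measureReal_nonneg.eq_or_lt with h0 | hpos
  · rw [← h0]; positivity
  · exact le_of_mul_le_mul_left h hpos

/-- Lower bound for the Gram determinant of indicator functions in `L²([0,1])`:
`G(𝟙_{Δ₁}, …, 𝟙_{Δₙ}) ≥ ∏ₖ λ(Δₖ \ ⋃_{j<k} Δⱼ)` (with `Δ₀ = ∅`). The Gram matrix entry
`⟨𝟙_{Δᵢ}, 𝟙_{Δⱼ}⟩ = ∫₀¹ 𝟙_{Δᵢ}𝟙_{Δⱼ}` equals the Lebesgue measure of `Δᵢ ∩ Δⱼ`. -/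
theorem gram_det_indicator_ge {n : ℕ} (Δ : Fin n → Set ℝ)
    (hmeas : ∀ i, MeasurableSet (Δ i)) (hsub : ∀ i, Δ i ⊆ Set.Icc 0 1) :
    Matrix.det (Matrix.of fun i j => (volume (Δ i ∩ Δ j)).toReal) ≥
      ∏ k : Fin n, (volume (Δ k \ ⋃ j ∈ Finset.Iio k, Δ j)).toReal := by
  have hfin i : volume (Δ i) ≠ ∞ := measure_ne_top_of_subset (hsub i) measure_Icc_lt_top.ne
  set v : Fin n → Lp ℝ 2 (volume : Measure ℝ) := fun i => indicatorConstLp 2 (hmeas i) (hfin i) 1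
  have hgram : Matrix.of (fun i j => (volume (Δ i ∩ Δ j)).toReal) = gram ℝ v := by
    ext i j
    exact (L2.real_inner_indicatorConstLp_one_indicatorConstLp_one _ _ _ _).symm
  rw [hgram, ge_iff_le]
  refine prod_le_det_gram v _ (fun k => ENNReal.toReal_nonneg) fun k w hw => ?_
  have hfresh : MeasurableSet (Δ k \ ⋃ j ∈ Finset.Iio k, Δ j) :=
    (hmeas k).diff (Finset.measurableSet_biUnion _ fun j _ => hmeas j)
  refine measureReal_le_norm_indicatorConstLp_sub_sq hfresh (hmeas k) (hfin k) Set.sdiff_subset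
    ?_ hw
  rintro _ ⟨j, hj, rfl⟩
  rw [L2.real_inner_indicatorConstLp_one_indicatorConstLp_one hfresh (hmeas j)
    (measure_ne_top_of_subset Set.sdiff_subset (hfin k)) (hfin j)]
  have hdisj : (Δ k \ ⋃ j ∈ Finset.Iio k, Δ j) ∩ Δ j = ∅ :=
    Set.disjoint_iff_inter_eq_empty.mp <| Set.disjoint_sdiff_left.mono_right <|
      Set.subset_biUnion_of_mem (u := Δ) (Finset.mem_Iio.mpr hj)
  rw [hdisj, measureReal_empty]
end

section
/- For every integer k ≥ 1 and real numbers 0 ≤ a < b, ∫_{Δ_k(a,b)} (∏_{i=1}^{k−1}(t_{i+1} − t_i))^{−1/2} dt₁⋯dt_k = π^{(k−1)/2} (b − a)^{(k+1)/2} / Γ((k+3)/2). -/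
/-!
Write a point of `Δ_{m+1}(a,b)` as `(x, y)` with `x = t₁` and `y ∈ Δ_m(x,b)`. With the
convention `t₀ = a`, the integral of `∏_{i=0}^{m-1} (t_{i+1} - t_i)^{-1/2}` over `Δ_m(a,b)` is
`π^{m/2} / Γ(m/2 + 1) · (b - a)^{m/2}`: peeling off `x` multiplies by `(x - a)^{-1/2}` and leaves
the same integral over `Δ_m(x,b)`, so by induction one Beta integral
`∫_a^b (x - a)^{-1/2} (b - x)^{m/2} dx = B(1/2, m/2 + 1) (b - a)^{(m+1)/2}` per step suffices.
The theorem's integrand has no factor for `t₁ - a`, so its first coordinate contributes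
`B(1, n/2 + 1)` instead.
-/

open MeasureTheory Set Real ProbabilityTheory

lemma lintegral_rpow_mul_one_sub_rpow {p q : ℝ} (hp : 0 < p) (hq : 0 < q) :
    ∫⁻ x in Ioo 0 1, ENNReal.ofReal (x ^ (p - 1) * (1 - x) ^ (q - 1)) =
      ENNReal.ofReal (beta p q) := by
  have hB := beta_pos hp hq
  calc ∫⁻ x in Ioo 0 1, ENNReal.ofReal (x ^ (p - 1) * (1 - x) ^ (q - 1))
      = ∫⁻ x in Ioo 0 1, ENNReal.ofReal (beta p q) *
          ENNReal.ofReal (1 / beta p q * x ^ (p - 1) * (1 - x) ^ (q - 1)) := by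
        refine lintegral_congr fun x => ?_
        rw [← ENNReal.ofReal_mul hB.le]
        field_simp
    _ = ENNReal.ofReal (beta p q) := by
        rw [lintegral_const_mul' _ _ ENNReal.ofReal_ne_top, ← lintegral_betaPDF,
          lintegral_betaPDF_eq_one hp hq, mul_one]

lemma lintegral_sub_rpow_mul_sub_rpow {a b p q : ℝ} (hab : a < b) (hp : 0 < p) (hq : 0 < q) :
    ∫⁻ x in Ioo a b, ENNReal.ofReal ((x - a) ^ (p - 1) * (b - x) ^ (q - 1)) =
      ENNReal.ofReal (beta p q * (b - a) ^ (p + q - 1)) := by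
  have hc : 0 < b - a := sub_pos.2 hab
  have himage : (fun u => (b - a) * u + a) '' Ioo 0 1 = Ioo a b := by
    rw [image_affine_Ioo hc]; simp
  rw [← himage, lintegral_image_eq_lintegral_abs_deriv_mul (f' := fun _ => b - a)
    measurableSet_Ioo
    (fun u _ => by
      simpa using ((hasDerivAt_id' u).const_mul (b - a)).add_const a |>.hasDerivWithinAt)
    (fun u _ v _ h => by simpa [hc.ne'] using h)]
  calc ∫⁻ u in Ioo 0 1, ENNReal.ofReal |b - a| *
        ENNReal.ofReal (((b - a) * u + a - a) ^ (p - 1) * (b - ((b - a) * u + a)) ^ (q - 1))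
      = ∫⁻ u in Ioo 0 1, ENNReal.ofReal ((b - a) ^ (p + q - 1)) *
          ENNReal.ofReal (u ^ (p - 1) * (1 - u) ^ (q - 1)) := by
        refine setLIntegral_congr_fun measurableSet_Ioo fun u ⟨hu0, hu1⟩ => ?_
        rw [← ENNReal.ofReal_mul (abs_nonneg _), ← ENNReal.ofReal_mul (by positivity)]
        congr 1
        rw [abs_of_pos hc, add_sub_cancel_right,
          show b - ((b - a) * u + a) = (b - a) * (1 - u) by ring,
          mul_rpow hc.le hu0.le, mul_rpow hc.le (by linarith),
          show p + q - 1 = (p - 1) + (q - 1) + 1 by ring, rpow_add hc, rpow_add hc, rpow_one]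
        ring
    _ = _ := by
        rw [lintegral_const_mul' _ _ ENNReal.ofReal_ne_top,
          lintegral_rpow_mul_one_sub_rpow hp hq, ← ENNReal.ofReal_mul (by positivity), mul_comm]

lemma beta_div_Gamma_right {p q : ℝ} (hq : 0 < q) :
    beta p q / Gamma q = Gamma p / Gamma (p + q) := by
  have := (Gamma_pos_of_pos hq).ne'
  rw [beta]; field_simp

def orderedSimplex (m : ℕ) (a b : ℝ) : Set (Fin m → ℝ) :=
  {t | Monotone t ∧ ∀ i, t i ∈ Icc a b}

lemma measurableSet_orderedSimplex (m : ℕ) (a b : ℝ) :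
    MeasurableSet (orderedSimplex m a b) := by
  have : orderedSimplex m a b = {t | Monotone t} ∩ univ.pi fun _ => Icc a b := by
    ext t; exact and_congr Iff.rfl mem_univ_pi.symm
  rw [this]
  exact (isClosed_monotone.inter (isClosed_set_pi fun _ _ => isClosed_Icc)).measurableSet

lemma Fin.monotone_cons_iff {α : Type*} [Preorder α] {m : ℕ} {x : α} {y : Fin m → α} :
    Monotone (Fin.cons x y : Fin (m + 1) → α) ↔ (∀ i, x ≤ y i) ∧ Monotone y := by
  rw [monotone_iff_forall_lt, monotone_iff_forall_lt]
  exact Fin.liftFun_cons (· ≤ ·)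

lemma cons_mem_orderedSimplex {m : ℕ} {a b x : ℝ} {y : Fin m → ℝ} :
    (Fin.cons x y : Fin (m + 1) → ℝ) ∈ orderedSimplex (m + 1) a b ↔
      x ∈ Icc a b ∧ y ∈ orderedSimplex m x b := by
  simp only [orderedSimplex, mem_ofPred_eq, Fin.monotone_cons_iff, Fin.forall_fin_succ,
    Fin.cons_zero, Fin.cons_succ, mem_Icc]
  constructor
  · rintro ⟨⟨hxy, hy⟩, ⟨hax, hxb⟩, hyab⟩
    exact ⟨⟨hax, hxb⟩, hy, fun i => ⟨hxy i, (hyab i).2⟩⟩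
  · rintro ⟨⟨hax, hxb⟩, hy, hyxb⟩
    exact ⟨⟨fun i => (hyxb i).1, hy⟩, ⟨hax, hxb⟩,
      fun i => ⟨hax.trans (hyxb i).1, (hyxb i).2⟩⟩

lemma lintegral_fin_cons {m : ℕ} {f : (Fin (m + 1) → ℝ) → ENNReal} (hf : Measurable f) :
    ∫⁻ t, f t = ∫⁻ x, ∫⁻ y, f (Fin.cons x y) := by
  rw [← (volume_preserving_piFinSuccAbove (fun _ : Fin (m + 1) => ℝ) 0).symm.lintegral_comp hf,
    Measure.volume_eq_prod]
  refine (lintegral_prod _ (hf.comp (MeasurableEquiv.measurable _)).aemeasurable).trans ?_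
  simp [MeasurableEquiv.piFinSuccAbove_symm_apply, Fin.insertNthEquiv]

lemma lintegral_orderedSimplex_succ {m : ℕ} {a b : ℝ} {f : (Fin (m + 1) → ℝ) → ENNReal}
    (hf : Measurable f) :
    ∫⁻ t in orderedSimplex (m + 1) a b, f t =
      ∫⁻ x in Icc a b, ∫⁻ y in orderedSimplex m x b, f (Fin.cons x y) := by
  rw [← lintegral_indicator (measurableSet_orderedSimplex _ a b),
    lintegral_fin_cons (hf.indicator (measurableSet_orderedSimplex _ a b)),
    ← lintegral_indicator measurableSet_Icc]
  congr 1 with x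
  by_cases hx : x ∈ Icc a b
  · rw [indicator_of_mem hx, ← lintegral_indicator (measurableSet_orderedSimplex m x b)]
    congr 1 with y
    by_cases hy : y ∈ orderedSimplex m x b <;> simp [cons_mem_orderedSimplex, hx, hy]
  · simp [cons_mem_orderedSimplex, hx]

def gapProd {m : ℕ} (t : Fin (m + 1) → ℝ) : ℝ :=
  ∏ i : Fin m, (t i.succ - t i.castSucc)

lemma gapProd_cons {m : ℕ} (x : ℝ) (y : Fin (m + 1) → ℝ) :
    gapProd (Fin.cons x y : Fin (m + 2) → ℝ) = (y 0 - x) * gapProd y := by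
  simp [gapProd, Fin.prod_univ_succ]

@[fun_prop]
lemma measurable_gapProd (m : ℕ) : Measurable (gapProd : (Fin (m + 1) → ℝ) → ℝ) := by
  unfold gapProd; fun_prop

lemma inv_sqrt_gapProd_cons {m : ℕ} {x : ℝ} {y : Fin (m + 1) → ℝ} (hxy : x ≤ y 0) :
    (√(gapProd (Fin.cons x y : Fin (m + 2) → ℝ)))⁻¹ =
      (y 0 - x) ^ ((1 / 2 : ℝ) - 1) * (√(gapProd y))⁻¹ := by
  rw [gapProd_cons, sqrt_mul (sub_nonneg.2 hxy), mul_inv, sqrt_eq_rpow,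
    ← rpow_neg (sub_nonneg.2 hxy)]
  norm_num

lemma lintegral_orderedSimplex_inv_sqrt_gapProd_cons (m : ℕ) {a b : ℝ} (hab : a < b) :
    ∫⁻ t in orderedSimplex m a b,
        ENNReal.ofReal (√(gapProd (Fin.cons a t : Fin (m + 1) → ℝ)))⁻¹ =
      ENNReal.ofReal
        (π ^ ((m : ℝ) / 2) / Gamma ((m : ℝ) / 2 + 1) * (b - a) ^ ((m : ℝ) / 2)) := by
  induction m generalizing a with
  | zero =>
    have : orderedSimplex 0 a b = univ :=
      eq_univ_of_forall fun t => ⟨Subsingleton.monotone t, fun i => i.elim0⟩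
    simp [gapProd, this, volume_pi]
  | succ m ih =>
    set V := π ^ ((m : ℝ) / 2) / Gamma ((m : ℝ) / 2 + 1)
    have hm : 0 < (m : ℝ) / 2 + 1 := by positivity
    have hinner : ∀ x ∈ Ioo a b,
        ∫⁻ y in orderedSimplex m x b,
            ENNReal.ofReal (√(gapProd (Fin.cons a (Fin.cons x y) : Fin (m + 2) → ℝ)))⁻¹ =
          ENNReal.ofReal V * ENNReal.ofReal
            ((x - a) ^ ((1 / 2 : ℝ) - 1) * (b - x) ^ ((m : ℝ) / 2 + 1 - 1)) := by
      intro x ⟨hax, hxb⟩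
      have hfactor (y : Fin m → ℝ) :
          ENNReal.ofReal (√(gapProd (Fin.cons a (Fin.cons x y) : Fin (m + 2) → ℝ)))⁻¹ =
            ENNReal.ofReal ((x - a) ^ ((1 / 2 : ℝ) - 1)) *
              ENNReal.ofReal (√(gapProd (Fin.cons x y : Fin (m + 1) → ℝ)))⁻¹ := by
        rw [inv_sqrt_gapProd_cons (by simpa using hax.le), Fin.cons_zero,
          ENNReal.ofReal_mul (by positivity)]
      simp_rw [hfactor]
      rw [lintegral_const_mul' _ _ ENNReal.ofReal_ne_top, ih hxb,
        ← ENNReal.ofReal_mul (by positivity), ← ENNReal.ofReal_mul (by positivity),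
        add_sub_cancel_right, mul_left_comm]
    rw [lintegral_orderedSimplex_succ (by fun_prop),
      setLIntegral_congr Ioo_ae_eq_Icc.symm, setLIntegral_congr_fun measurableSet_Ioo hinner,
      lintegral_const_mul' _ _ ENNReal.ofReal_ne_top,
      lintegral_sub_rpow_mul_sub_rpow hab (by norm_num) hm, ← ENNReal.ofReal_mul (by positivity)]
    congr 1
    have hV : V * beta (1 / 2) ((m : ℝ) / 2 + 1) =
        π ^ ((m : ℝ) / 2) * (Gamma (1 / 2) / Gamma (1 / 2 + ((m : ℝ) / 2 + 1))) := by
      rw [← beta_div_Gamma_right hm]; ring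
    rw [← mul_assoc, hV, Gamma_one_half_eq, sqrt_eq_rpow,
      show (1 / 2 : ℝ) + ((m : ℝ) / 2 + 1) = (m : ℝ) / 2 + 1 / 2 + 1 by ring,
      add_sub_cancel_right,
      show ((m + 1 : ℕ) : ℝ) / 2 = (m : ℝ) / 2 + 1 / 2 by push_cast; ring, rpow_add pi_pos]
    ring

lemma lintegral_orderedSimplex_inv_sqrt_gapProd (n : ℕ) {a b : ℝ} (hab : a < b) :
    ∫⁻ t in orderedSimplex (n + 1) a b, ENNReal.ofReal (√(gapProd t))⁻¹ =
      ENNReal.ofReal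
        (π ^ ((n : ℝ) / 2) / Gamma ((n : ℝ) / 2 + 2) * (b - a) ^ ((n : ℝ) / 2 + 1)) := by
  set V := π ^ ((n : ℝ) / 2) / Gamma ((n : ℝ) / 2 + 1)
  have hn : 0 < (n : ℝ) / 2 + 1 := by positivity
  have hinner : ∀ x ∈ Ioo a b,
      ∫⁻ y in orderedSimplex n x b,
          ENNReal.ofReal (√(gapProd (Fin.cons x y : Fin (n + 1) → ℝ)))⁻¹ =
        ENNReal.ofReal V *
          ENNReal.ofReal ((x - a) ^ ((1 : ℝ) - 1) * (b - x) ^ ((n : ℝ) / 2 + 1 - 1)) := by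
    intro x hx
    rw [lintegral_orderedSimplex_inv_sqrt_gapProd_cons n hx.2,
      ← ENNReal.ofReal_mul (by positivity), sub_self, rpow_zero, one_mul, add_sub_cancel_right]
  rw [lintegral_orderedSimplex_succ (by fun_prop),
    setLIntegral_congr Ioo_ae_eq_Icc.symm, setLIntegral_congr_fun measurableSet_Ioo hinner,
    lintegral_const_mul' _ _ ENNReal.ofReal_ne_top,
    lintegral_sub_rpow_mul_sub_rpow hab one_pos hn, ← ENNReal.ofReal_mul (by positivity)]
  congr 1
  have hV : V * beta 1 ((n : ℝ) / 2 + 1) =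
      π ^ ((n : ℝ) / 2) * (Gamma 1 / Gamma (1 + ((n : ℝ) / 2 + 1))) := by
    rw [← beta_div_Gamma_right hn]; ring
  rw [← mul_assoc, hV, Gamma_one, show 1 + ((n : ℝ) / 2 + 1) = (n : ℝ) / 2 + 2 by ring,
    show (n : ℝ) / 2 + 2 - 1 = (n : ℝ) / 2 + 1 by ring]
  ring

theorem simplex_integral_eq_general {n : ℕ} {a b : ℝ} (hab : a < b) :
    (∫ t in {t : Fin (n + 1) → ℝ | Monotone t ∧ ∀ i, t i ∈ Set.Icc a b},
        (Real.sqrt (∏ i : Fin n, (t i.succ - t i.castSucc)))⁻¹) =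
      Real.pi ^ ((n : ℝ) / 2) * (b - a) ^ (((n : ℝ) + 2) / 2) /
        Real.Gamma (((n : ℝ) + 4) / 2) := by
  change ∫ t in orderedSimplex (n + 1) a b, (√(gapProd t))⁻¹ = _
  rw [integral_eq_lintegral_of_nonneg_ae (ae_of_all _ fun t => by positivity)
      (by fun_prop : Measurable fun t => (√(gapProd t))⁻¹).aestronglyMeasurable,
    lintegral_orderedSimplex_inv_sqrt_gapProd n hab, ENNReal.toReal_ofReal (by positivity),
    show ((n : ℝ) + 2) / 2 = (n : ℝ) / 2 + 1 by ring,
    show ((n : ℝ) + 4) / 2 = (n : ℝ) / 2 + 2 by ring]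
  ring

/-- Simplex integral identity: for `k = n + 1 ≥ 1` and `0 ≤ a < b`,
`∫_{Δ_k(a,b)} (∏_{i=1}^{k−1}(t_{i+1} − t_i))^{−1/2} dt = π^{(k−1)/2}(b−a)^{(k+1)/2}/Γ((k+3)/2)`. -/
theorem simplex_integral_eq {n : ℕ} {a b : ℝ} (ha : 0 ≤ a) (hab : a < b) :
    (∫ t in {t : Fin (n + 1) → ℝ | Monotone t ∧ ∀ i, t i ∈ Set.Icc a b},
        (Real.sqrt (∏ i : Fin n, (t i.succ - t i.castSucc)))⁻¹) =
      Real.pi ^ ((n : ℝ) / 2) * (b - a) ^ (((n : ℝ) + 2) / 2) /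
        Real.Gamma (((n : ℝ) + 4) / 2) :=
  simplex_integral_eq_general hab
end

section
/- Let s₁ < ⋯ be the endpoints 0 = s₀ < s₁ < ⋯ < s_N < s_{N+1} = 1 of a partition of [0,1], and let P̃ be the orthogonal projection in L²([0,1]) onto span{𝟙_{[s₀,s₁]}, …, 𝟙_{[s_N,1]}}. Then for any t₁ ≤ ⋯ ≤ t_k in [0,1], G((I − P̃)𝟙_{[t₁,t₂]}, …, (I − P̃)𝟙_{[t_{k−1},t_k]}) = (∏_{j=0}^{N}(s_{j+1} − s_j))^{−1} · G(𝟙_{[t₁,t₂]}, …, 𝟙_{[t_{k−1},t_k]}, 𝟙_{[s₀,s₁]}, …, 𝟙_{[s_N,1]}). -/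
open MeasureTheory
open scoped RealInnerProductSpace

noncomputable abbrev L2unit : Type :=
  Lp ℝ 2 (volume.restrict (Set.Icc (0 : ℝ) 1))

/-- The indicator `𝟙_{[s,t]}` as an element of `L²([0,1])`. -/
noncomputable def ind (s t : ℝ) : L2unit :=
  indicatorConstLp 2 (measurableSet_Icc : MeasurableSet (Set.Icc s t))
    (by
      rw [Measure.restrict_apply measurableSet_Icc]
      exact ((measure_mono Set.inter_subset_right).trans_lt measure_Icc_lt_top).ne)
    (1 : ℝ)

/-!
Write `u = v - P v` with `P` the orthogonal projection onto `K = span w`. The family `(u, w)`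
arises from `(v, w)` by a unitriangular change of basis, so both have the same Gram determinant;
and since `u ⊥ w` the Gram matrix of `(u, w)` is block diagonal. Hence
`G(u) · G(w) = G(v, w)`. For the partition indicators `w j = 𝟙_{[s_j, s_{j+1}]}`, which are
pairwise orthogonal, `G(w) = ∏ⱼ (s_{j+1} - s_j)`.
-/

namespace Matrix

open scoped InnerProductSpace

variable {𝕜 E : Type*} [RCLike 𝕜] [NormedAddCommGroup E] [InnerProductSpace 𝕜 E]
  {ι κ : Type*} [Fintype ι] [Fintype κ]

lemma gram_sum_smul {m : Type*} (B : Matrix ι m 𝕜) (f : ι → E) :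
    gram 𝕜 (fun k => ∑ l, B l k • f l) = Bᴴ * gram 𝕜 f * B := by
  ext k k'
  simp only [gram_apply, mul_apply, conjTranspose_apply, sum_inner, inner_sum,
    inner_smul_left, inner_smul_right, Finset.sum_mul, Finset.mul_sum, RCLike.star_def]
  exact Finset.sum_congr rfl fun _ _ => Finset.sum_congr rfl fun _ _ => by ring

lemma det_gram_sum_elim_eq_of_sub_mem_span [DecidableEq ι] [DecidableEq κ] {u v : ι → E}
    {w : κ → E} (h : ∀ i, u i - v i ∈ Submodule.span 𝕜 (Set.range w)) :
    (gram 𝕜 (Sum.elim u w)).det = (gram 𝕜 (Sum.elim v w)).det := by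
  choose c hc using fun i => (Submodule.mem_span_range_iff_exists_fun 𝕜).mp (h i)
  set B : Matrix (ι ⊕ κ) (ι ⊕ κ) 𝕜 := fromBlocks 1 0 (of c)ᵀ 1
  have hB : B.det = 1 := by simp [B]
  have hcomb : Sum.elim u w = fun k => ∑ l, B l k • Sum.elim v w l := by
    ext (i | j) <;> simp [B, Fintype.sum_sum_type, one_apply, hc]
  rw [hcomb, gram_sum_smul, det_mul, det_mul, det_conjTranspose, hB]
  simp

lemma det_gram_sum_elim_of_orthogonal [DecidableEq ι] [DecidableEq κ] {u : ι → E} {w : κ → E}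
    (h : ∀ i j, ⟪u i, w j⟫_𝕜 = 0) :
    (gram 𝕜 (Sum.elim u w)).det = (gram 𝕜 u).det * (gram 𝕜 w).det := by
  have hblock : gram 𝕜 (Sum.elim u w) = fromBlocks (gram 𝕜 u) 0 0 (gram 𝕜 w) := by
    ext (i | i) (j | j)
    · rfl
    · exact h i j
    · exact inner_eq_zero_symm.mp (h j i)
    · rfl
  rw [hblock, det_fromBlocks_zero₂₁]

theorem det_gram_sub_starProjection_mul_det_gram [DecidableEq ι] [DecidableEq κ]
    (v : ι → E) (w : κ → E) (K : Submodule 𝕜 E) [K.HasOrthogonalProjection]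
    (hK : K = Submodule.span 𝕜 (Set.range w)) :
    (gram 𝕜 fun i => v i - K.starProjection (v i)).det * (gram 𝕜 w).det =
      (gram 𝕜 (Sum.elim v w)).det := by
  have horth : ∀ i j, ⟪v i - K.starProjection (v i), w j⟫_𝕜 = 0 := fun i j =>
    (Submodule.mem_orthogonal' _ _).mp (Submodule.sub_starProjection_mem_orthogonal (v i))
      (w j) (hK ▸ Submodule.subset_span (Set.mem_range_self j))
  rw [← det_gram_sum_elim_of_orthogonal horth]
  exact det_gram_sum_elim_eq_of_sub_mem_span fun i => by rw [← hK]; simp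

end Matrix

lemma inner_ind (a b c d : ℝ) :
    ⟪ind a b, ind c d⟫ = volume.real (Set.Icc a b ∩ Set.Icc c d ∩ Set.Icc (0 : ℝ) 1) := by
  rw [ind, L2.inner_indicatorConstLp_one, ind,
    integral_congr_ae (ae_restrict_of_ae indicatorConstLp_coeFn),
    setIntegral_indicator measurableSet_Icc, setIntegral_const, smul_eq_mul, mul_one,
    measureReal_restrict_apply (measurableSet_Icc.inter measurableSet_Icc)]

lemma inner_ind_self {a b : ℝ} (ha : 0 ≤ a) (hab : a ≤ b) (hb : b ≤ 1) :
    ⟪ind a b, ind a b⟫ = b - a := by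
  rw [inner_ind, Set.inter_self, Set.inter_eq_left.mpr (Set.Icc_subset_Icc ha hb),
    Real.volume_real_Icc_of_le hab]

lemma inner_ind_eq_zero_of_le {a b c d : ℝ} (h : b ≤ c) : ⟪ind a b, ind c d⟫ = 0 := by
  rw [inner_ind, measureReal_def, ENNReal.toReal_eq_zero_iff]
  refine Or.inl (measure_mono_null Set.inter_subset_left ?_)
  rw [Set.Icc_inter_Icc, Real.volume_Icc, ENNReal.ofReal_eq_zero, sub_nonpos]
  exact (min_le_left _ _).trans (h.trans (le_max_right _ _))

lemma gram_ind_partition {N : ℕ} {s : Fin (N + 2) → ℝ} (hs : Monotone s) (hs0 : 0 ≤ s 0)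
    (hs1 : s (Fin.last (N + 1)) ≤ 1) :
    Matrix.gram ℝ (fun j : Fin (N + 1) => ind (s j.castSucc) (s j.succ)) =
      Matrix.diagonal fun j => s j.succ - s j.castSucc := by
  ext i j
  rw [Matrix.gram_apply]
  rcases lt_trichotomy i j with h | rfl | h
  · rw [Matrix.diagonal_apply_ne _ h.ne]
    exact inner_ind_eq_zero_of_le (hs (Fin.succ_le_castSucc_iff.mpr h))
  · rw [Matrix.diagonal_apply_eq]
    exact inner_ind_self (hs0.trans (hs (Fin.zero_le _))) (hs Fin.castSucc_lt_succ.le)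
      ((hs (Fin.le_last _)).trans hs1)
  · rw [Matrix.diagonal_apply_ne _ h.ne', real_inner_comm]
    exact inner_ind_eq_zero_of_le (hs (Fin.succ_le_castSucc_iff.mpr h))

theorem gram_det_partition_projection_general {N : ℕ} (s : Fin (N + 2) → ℝ)
    (hs : StrictMono s) (hs0 : s 0 = 0) (hs1 : s (Fin.last (N + 1)) = 1)
    {n : ℕ} (t : Fin (n + 1) → ℝ)
    (K : Submodule ℝ L2unit) [CompleteSpace K]
    (hK : K = Submodule.span ℝ
      (Set.range fun j : Fin (N + 1) => ind (s j.castSucc) (s j.succ))) :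
    Matrix.det (Matrix.of fun i j : Fin n =>
        ⟪ind (t i.castSucc) (t i.succ) -
            (Submodule.orthogonalProjectionOnto K (ind (t i.castSucc) (t i.succ)) : L2unit),
          ind (t j.castSucc) (t j.succ) -
            (Submodule.orthogonalProjectionOnto K (ind (t j.castSucc) (t j.succ)) : L2unit)⟫) =
      (∏ j : Fin (N + 1), (s j.succ - s j.castSucc))⁻¹ *
        Matrix.det (Matrix.of fun i j : Fin n ⊕ Fin (N + 1) =>
          ⟪Sum.elim (fun i : Fin n => ind (t i.castSucc) (t i.succ))
              (fun j : Fin (N + 1) => ind (s j.castSucc) (s j.succ)) i,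
            Sum.elim (fun i : Fin n => ind (t i.castSucc) (t i.succ))
              (fun j : Fin (N + 1) => ind (s j.castSucc) (s j.succ)) j⟫) := by
  have key := Matrix.det_gram_sub_starProjection_mul_det_gram
    (fun i : Fin n => ind (t i.castSucc) (t i.succ)) _ K hK
  rw [gram_ind_partition hs.monotone hs0.ge hs1.le, Matrix.det_diagonal] at key
  have hpos : 0 < ∏ j : Fin (N + 1), (s j.succ - s j.castSucc) :=
    Finset.prod_pos fun j _ => sub_pos.mpr (hs Fin.castSucc_lt_succ)
  rw [eq_inv_mul_iff_mul_eq₀ hpos.ne', mul_comm]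
  exact key

/-- For the projection `P̃` onto the span of indicators of a partition
`0 = s₀ < s₁ < ⋯ < s_N < s_{N+1} = 1` of `[0,1]` and `t₁ ≤ ⋯ ≤ t_k` in `[0,1]`:
`G((I−P̃)𝟙_{[t₁,t₂]},…,(I−P̃)𝟙_{[t_{k−1},t_k]})
  = (∏ⱼ(s_{j+1}−s_j))⁻¹ · G(𝟙_{[t₁,t₂]},…,𝟙_{[t_{k−1},t_k]},𝟙_{[s₀,s₁]},…,𝟙_{[s_N,1]})`. -/
theorem gram_det_partition_projection {N : ℕ} (s : Fin (N + 2) → ℝ)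
    (hs : StrictMono s) (hs0 : s 0 = 0) (hs1 : s (Fin.last (N + 1)) = 1)
    {n : ℕ} (t : Fin (n + 1) → ℝ) (ht : Monotone t)
    (hI : ∀ i, t i ∈ Set.Icc (0 : ℝ) 1)
    (K : Submodule ℝ L2unit) [CompleteSpace K]
    (hK : K = Submodule.span ℝ
      (Set.range fun j : Fin (N + 1) => ind (s j.castSucc) (s j.succ))) :
    Matrix.det (Matrix.of fun i j : Fin n =>
        ⟪ind (t i.castSucc) (t i.succ) -
            (Submodule.orthogonalProjectionOnto K (ind (t i.castSucc) (t i.succ)) : L2unit),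
          ind (t j.castSucc) (t j.succ) -
            (Submodule.orthogonalProjectionOnto K (ind (t j.castSucc) (t j.succ)) : L2unit)⟫) =
      (∏ j : Fin (N + 1), (s j.succ - s j.castSucc))⁻¹ *
        Matrix.det (Matrix.of fun i j : Fin n ⊕ Fin (N + 1) =>
          ⟪Sum.elim (fun i : Fin n => ind (t i.castSucc) (t i.succ))
              (fun j : Fin (N + 1) => ind (s j.castSucc) (s j.succ)) i,
            Sum.elim (fun i : Fin n => ind (t i.castSucc) (t i.succ))
              (fun j : Fin (N + 1) => ind (s j.castSucc) (s j.succ)) j⟫) :=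
  gram_det_partition_projection_general s hs hs0 hs1 t K hK
end
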